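/- For all n < N < ⌊5n/2⌋ − 1, the n × N 0-1 matrix R^{(n,N)} defined below satisfies st(R^{(n,N)}) = ⌈(2n+N−2)/3⌉; consequently st(n,N) ≤ ⌈(2n+N−2)/3⌉ in this range. -/

import Mathlib

/-- A step of a staircase: the next position is strictly to the right in the
same row, or strictly below in the same column. -/
def Step {n N : ℕ} (p q : Fin n × Fin N) : Prop :=
  (p.1 = q.1 ∧ p.2 < q.2) ∨ (p.2 = q.2 ∧ p.1 < q.1)

/-- A `v`-staircase in the 0-1 matrix `M`: a sequence of positions all holding
the value `v`, each successive one strictly to the right in the same row or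
strictly below in the same column of the previous one. -/
def IsStaircase {n N : ℕ} (M : Fin n → Fin N → Fin 2) (v : Fin 2)
    (L : List (Fin n × Fin N)) : Prop :=
  (∀ p ∈ L, M p.1 p.2 = v) ∧ L.Chain' Step

/-- The matrix R^(n,N) (1-based indices i, j): R_(i,j) = 1 iff
(1) i ≤ ⌈n/2⌉ and i+j ≤ ⌊(N−n+2)/3⌋+1, or
(2) i ≤ ⌈n/2⌉ and i+j > ⌊(N−n+2)/3⌋ + ⌈(2n+N−2)/3⌉ + 1, or
(3) i > ⌈n/2⌉ and n + ⌊(N−n+2)/3⌋ < i+j ≤ n + N − ⌈(N−n−1)/3⌉. -/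
def Rmat (n N : ℕ) : Fin n → Fin N → Fin 2 := fun i j =>
  if (i.1 + 1 ≤ (n + 1) / 2 ∧ (i.1 + 1) + (j.1 + 1) ≤ (N - n + 2) / 3 + 1) ∨
     (i.1 + 1 ≤ (n + 1) / 2 ∧
       (N - n + 2) / 3 + (2 * n + N - 2 + 2) / 3 + 1 < (i.1 + 1) + (j.1 + 1)) ∨
     ((n + 1) / 2 < i.1 + 1 ∧
       n + (N - n + 2) / 3 < (i.1 + 1) + (j.1 + 1) ∧
       (i.1 + 1) + (j.1 + 1) ≤ n + N - (N - n - 1 + 2) / 3)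
  then 1 else 0

/-- `stMax M`: the maximum length of a homogeneous (0- or 1-) staircase in `M`. -/
noncomputable def stMax {n N : ℕ} (M : Fin n → Fin N → Fin 2) : ℕ :=
  sSup {l : ℕ | ∃ (v : Fin 2) (L : List (Fin n × Fin N)),
    IsStaircase M v L ∧ L.length = l}

/-!
Row `1` of `R^(n,N)` contains `⌈(2n+N-2)/3⌉` consecutive zeros. Conversely, for each colour there
is a potential on the cells, essentially the anti-diagonal index `i + j` with one block of cells
moved back by `⌈(2n+N-2)/3⌉`, that maps the cells of that colour into an interval of length
`⌈(2n+N-2)/3⌉` and increases strictly along every step between two of them; hence no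
homogeneous staircase is longer than that interval.
-/

theorem List.length_le_card_of_isChain_lt {α : Type*} [Preorder α] {l : List α} {s : Finset α}
    (hl : l.IsChain (· < ·)) (hs : ∀ x ∈ l, x ∈ s) : l.length ≤ s.card := by
  classical
  have hnodup : l.Nodup := (List.isChain_iff_pairwise.mp hl).imp ne_of_lt
  rw [← List.toFinset_card_of_nodup hnodup]
  exact Finset.card_le_card fun x hx => hs x (List.mem_toFinset.mp hx)

section Staircase

variable {n N : ℕ} {M : Fin n → Fin N → Fin 2} {v : Fin 2}

lemma exists_isStaircase_of_row (i : Fin n) (a k : ℕ) (hk : a + k ≤ N)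
    (hrow : ∀ j : Fin N, a ≤ j → j < a + k → M i j = v) :
    ∃ L, IsStaircase M v L ∧ L.length = k := by
  refine ⟨List.ofFn fun t : Fin k => (i, ⟨a + t, by omega⟩), ⟨?_, ?_⟩, List.length_ofFn⟩
  · simp only [List.mem_ofFn, forall_exists_index]
    rintro _ t rfl
    exact hrow _ (Nat.le_add_right a t) (by simp)
  · exact List.isChain_ofFn.mpr fun t _ => Or.inl ⟨rfl, by simp [Fin.lt_def]⟩

lemma IsStaircase.length_le_of_potential {L : List (Fin n × Fin N)} (hL : IsStaircase M v L)
    (φ : Fin n × Fin N → ℕ) (lo k : ℕ)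
    (hφ_mem : ∀ p : Fin n × Fin N, M p.1 p.2 = v → lo ≤ φ p ∧ φ p < lo + k)
    (hφ_step : ∀ p q : Fin n × Fin N, M p.1 p.2 = v → M q.1 q.2 = v → Step p q → φ p < φ q) :
    L.length ≤ k := by
  obtain ⟨hval, hchain⟩ := hL
  have hmono : (L.map φ).IsChain (· < ·) :=
    (List.isChain_map φ).mpr <| hchain.imp_of_mem_imp fun p q hp hq =>
      hφ_step p q (hval p hp) (hval q hq)
  simpa using List.length_le_card_of_isChain_lt hmono (s := Finset.Ico lo (lo + k)) <| by
    simp only [List.mem_map, Finset.mem_Ico, forall_exists_index, and_imp]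
    rintro _ p hp rfl
    exact hφ_mem p (hval p hp)

end Staircase

lemma step_iff_val {n N : ℕ} {p q : Fin n × Fin N} :
    Step p q ↔ (p.1.1 = q.1.1 ∧ p.2.1 < q.2.1) ∨ (p.2.1 = q.2.1 ∧ p.1.1 < q.1.1) := by
  simp only [Step, Fin.ext_iff, Fin.lt_def]

namespace Rmat

def topRows (n : ℕ) : ℕ := (n + 1) / 2

def cornerWidth (n N : ℕ) : ℕ := (N - n + 2) / 3

def tailWidth (n N : ℕ) : ℕ := (N - n - 1 + 2) / 3

def stBound (n N : ℕ) : ℕ := (2 * n + N - 2 + 2) / 3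

variable {n N : ℕ}

lemma param_bounds (hnN : n < N) :
    2 * topRows n ≤ n + 1 ∧ n + 1 < 2 * topRows n + 2 ∧
    3 * cornerWidth n N + n ≤ N + 2 ∧ N + 2 < 3 * cornerWidth n N + n + 3 ∧
    3 * tailWidth n N + n ≤ N + 1 ∧ N + 1 < 3 * tailWidth n N + n + 3 ∧
    3 * stBound n N ≤ 2 * n + N ∧ 2 * n + N < 3 * stBound n N + 3 := by
  unfold topRows cornerWidth tailWidth stBound
  omega

lemma apply_eq_one_iff (i : Fin n) (j : Fin N) :
    Rmat n N i j = 1 ↔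
      (i < topRows n ∧
        ((i + j : ℕ) < cornerWidth n N ∨ cornerWidth n N + stBound n N ≤ (i + j : ℕ))) ∨
      (topRows n ≤ i ∧ n + cornerWidth n N ≤ (i + j : ℕ) + 1 ∧
        (i + j : ℕ) + tailWidth n N + 2 ≤ n + N) := by
  unfold Rmat topRows cornerWidth tailWidth stBound
  split_ifs <;> simp only [Fin.isValue, zero_ne_one, true_iff, false_iff] <;> omega

lemma apply_eq_zero_iff (i : Fin n) (j : Fin N) :
    Rmat n N i j = 0 ↔
      (i < topRows n ∧
        cornerWidth n N ≤ (i + j : ℕ) ∧ (i + j : ℕ) < cornerWidth n N + stBound n N) ∨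
      (topRows n ≤ i ∧ (i + j : ℕ) + 1 < n + cornerWidth n N) ∨
      (topRows n ≤ i ∧ n + N < (i + j : ℕ) + tailWidth n N + 2) := by
  unfold Rmat topRows cornerWidth tailWidth stBound
  split_ifs <;> simp only [Fin.isValue, one_ne_zero, true_iff, false_iff] <;> omega

lemma cornerWidth_add_tailWidth_add_stBound (hnN : n < N) :
    cornerWidth n N + tailWidth n N + stBound n N = N := by
  unfold cornerWidth tailWidth stBound
  omega

/-- Anti-diagonal index, with the lower right block of zeros moved back by `stBound` so that
it continues the band of zeros of the top rows. -/
def zeroPotential (n N : ℕ) (p : Fin n × Fin N) : ℕ :=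
  if n + cornerWidth n N + stBound n N ≤ p.1 + p.2 + 1 then p.1 + p.2 - stBound n N
  else p.1 + p.2

/-- In the top rows: anti-diagonal index, with the upper right block of ones moved back by
`stBound`; in the bottom rows: position inside the band of ones. -/
def onePotential (n N : ℕ) (p : Fin n × Fin N) : ℕ :=
  if topRows n ≤ p.1 then p.1 + p.2 + 1 - (n + cornerWidth n N)
  else if cornerWidth n N + stBound n N ≤ p.1 + p.2 then p.1 + p.2 - stBound n N
  else p.1 + p.2

lemma zeroPotential_mem (hnN : n < N) (hN : 2 * N + 4 ≤ 5 * n) {p : Fin n × Fin N}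
    (hp : Rmat n N p.1 p.2 = 0) :
    cornerWidth n N ≤ zeroPotential n N p ∧
      zeroPotential n N p < cornerWidth n N + stBound n N := by
  have := param_bounds hnN; have := p.1.isLt; have := p.2.isLt
  rw [apply_eq_zero_iff] at hp
  unfold zeroPotential
  split_ifs <;> omega

lemma zeroPotential_lt_of_step (hnN : n < N) {p q : Fin n × Fin N}
    (hp : Rmat n N p.1 p.2 = 0) (hq : Rmat n N q.1 q.2 = 0) (hpq : Step p q) :
    zeroPotential n N p < zeroPotential n N q := by
  have := cornerWidth_add_tailWidth_add_stBound hnN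
  have := p.1.isLt; have := p.2.isLt; have := q.1.isLt; have := q.2.isLt
  rw [apply_eq_zero_iff] at hp hq
  rw [step_iff_val] at hpq
  unfold zeroPotential
  split_ifs <;> omega

lemma onePotential_lt (hnN : n < N) (hN : 2 * N + 4 ≤ 5 * n) {p : Fin n × Fin N}
    (hp : Rmat n N p.1 p.2 = 1) : onePotential n N p < stBound n N := by
  have := param_bounds hnN; have := p.1.isLt; have := p.2.isLt
  rw [apply_eq_one_iff] at hp
  unfold onePotential
  split_ifs <;> omega

lemma onePotential_lt_of_step (hnN : n < N) {p q : Fin n × Fin N}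
    (hp : Rmat n N p.1 p.2 = 1) (hq : Rmat n N q.1 q.2 = 1) (hpq : Step p q) :
    onePotential n N p < onePotential n N q := by
  have := param_bounds hnN; have := p.1.isLt; have := p.2.isLt; have := q.1.isLt; have := q.2.isLt
  rw [apply_eq_one_iff] at hp hq
  rw [step_iff_val] at hpq
  unfold onePotential
  split_ifs <;> omega

lemma exists_isStaircase_zero (hnN : n < N) (hn : 0 < n) :
    ∃ L, IsStaircase (Rmat n N) 0 L ∧ L.length = stBound n N := by
  have := param_bounds hnN
  refine exists_isStaircase_of_row ⟨0, hn⟩ (cornerWidth n N) (stBound n N) (by omega) ?_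
  intro j hj₁ hj₂
  rw [apply_eq_zero_iff, Fin.val_mk]
  omega

lemma length_le_stBound (hnN : n < N) (hN : 2 * N + 4 ≤ 5 * n) {v : Fin 2}
    {L : List (Fin n × Fin N)} (hL : IsStaircase (Rmat n N) v L) : L.length ≤ stBound n N := by
  fin_cases v
  · exact hL.length_le_of_potential (zeroPotential n N) (cornerWidth n N) (stBound n N)
      (fun _ => zeroPotential_mem hnN hN) (fun _ _ => zeroPotential_lt_of_step hnN)
  · exact hL.length_le_of_potential (onePotential n N) 0 (stBound n N)
      (fun _ hp => ⟨Nat.zero_le _, by simpa using onePotential_lt hnN hN hp⟩)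
      (fun _ _ => onePotential_lt_of_step hnN)

end Rmat

/-- For n < N < ⌊5n/2⌋ − 1, the maximum homogeneous staircase length in
R^(n,N) is exactly ⌈(2n+N−2)/3⌉; consequently st(n,N) ≤ ⌈(2n+N−2)/3⌉. -/
theorem stmt8 (n N : ℕ) (hnN : n < N) (hN : N < 5 * n / 2 - 1) :
    IsGreatest {l : ℕ | ∃ (v : Fin 2) (L : List (Fin n × Fin N)),
        IsStaircase (Rmat n N) v L ∧ L.length = l} ((2 * n + N - 2 + 2) / 3) ∧
    sInf {s : ℕ | ∃ M : Fin n → Fin N → Fin 2, stMax M = s}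
      ≤ (2 * n + N - 2 + 2) / 3 := by
  have hN' : 2 * N + 4 ≤ 5 * n := by omega
  have hmax : IsGreatest {l : ℕ | ∃ (v : Fin 2) (L : List (Fin n × Fin N)),
      IsStaircase (Rmat n N) v L ∧ L.length = l} (Rmat.stBound n N) := by
    refine ⟨⟨0, Rmat.exists_isStaircase_zero hnN (by omega)⟩, ?_⟩
    rintro _ ⟨v, L, hL, rfl⟩
    exact Rmat.length_le_stBound hnN hN' hL
  exact ⟨hmax, Nat.sInf_le ⟨Rmat n N, hmax.csSup_eq⟩⟩
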